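/- On a bounded Vilenkin group with λ := sup_n m_n, for every nonzero x, sup_{n∈ℕ} |K_n^ψ(x)| ≥ (2πλ|x|)^{-1}, where |x| := M_k^{-1} for x ∈ I_k \ I_{k+1}; consequently the Vilenkin-Fejér kernels do not possess an integrable upper envelope. -/

import Mathlib

open MeasureTheory Filter Complex

/-- The (bounded) Vilenkin group `G_m = ∏_k Z_{m_k}`. -/
abbrev VilGroup (m : ℕ → ℕ) : Type := Π k, ZMod (m k)

/-- The generalized powers `M_0 = 1`, `M_{k+1} = m_k M_k`. -/
def Mgen (m : ℕ → ℕ) : ℕ → ℕ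
  | 0 => 1
  | k + 1 => m k * Mgen m k

/-- The `j`-th digit of `n` in the `M`-adic (mixed radix) number system. -/
def vDigit (m : ℕ → ℕ) (n j : ℕ) : ℕ := (n / Mgen m j) % m j

/-- The generalized Rademacher functions `r_k(x) = exp(2πi x_k / m_k)`. -/
noncomputable def rademacher (m : ℕ → ℕ) (k : ℕ) (x : VilGroup m) : ℂ :=
  Complex.exp (2 * Real.pi * Complex.I * ((x k).val : ℂ) / (m k : ℂ))

/-- The Vilenkin functions `ψ_n = ∏_k r_k^{n_k}`. -/
noncomputable def vilenkin (m : ℕ → ℕ) (n : ℕ) (x : VilGroup m) : ℂ :=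
  ∏ j ∈ Finset.range (n + 1), (rademacher m j x) ^ (vDigit m n j)

/-- The Vilenkin-Dirichlet kernels `D_k^ψ = ∑_{j<k} ψ_j`. -/
noncomputable def vilenkinDirichlet (m : ℕ → ℕ) (k : ℕ) (x : VilGroup m) : ℂ :=
  ∑ j ∈ Finset.range k, vilenkin m j x

/-- The Vilenkin-Fejér kernels `K_n^ψ = (1/n) ∑_{k<n} D_k^ψ`. -/
noncomputable def vilenkinFejer (m : ℕ → ℕ) (n : ℕ) (x : VilGroup m) : ℂ :=
  (1 / n) * ∑ k ∈ Finset.range n, vilenkinDirichlet m k x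

/-- The cylinder `I_N = I_N(0) = {y : y_0 = ⋯ = y_{N-1} = 0}`. -/
def cylV (m : ℕ → ℕ) (N : ℕ) : Set (VilGroup m) := {y | ∀ j < N, y j = 0}

/-- The Vilenkin interval `I_N(x)`. -/
def cylVAt (m : ℕ → ℕ) (N : ℕ) (x : VilGroup m) : Set (VilGroup m) :=
  {y | ∀ j < N, y j = x j}

/-- `μ` is the normalized Haar measure on `G_m`, characterized by
`μ(I_N(x)) = 1/M_N` for every cylinder. -/
def IsVilHaar (m : ℕ → ℕ) (μ : Measure (VilGroup m)) : Prop :=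
  ∀ (N : ℕ) (x : VilGroup m), μ (cylVAt m N x) = (Mgen m N : ENNReal)⁻¹

/-- The `k`-th Vilenkin-Fourier coefficient. -/
noncomputable def vCoef (m : ℕ → ℕ) (μ : Measure (VilGroup m))
    (f : VilGroup m → ℂ) (k : ℕ) : ℂ :=
  ∫ x, f x * (starRingEnd ℂ) (vilenkin m k x) ∂μ

/-- The partial sums `S_n^ψ f` of the Vilenkin-Fourier series. -/
noncomputable def vPartialSum (m : ℕ → ℕ) (μ : Measure (VilGroup m))
    (f : VilGroup m → ℂ) (n : ℕ) (x : VilGroup m) : ℂ :=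
  ∑ k ∈ Finset.range n, vCoef m μ f k * vilenkin m k x

/-- The Vilenkin-Fejér means `σ_n^ψ f = (1/n) ∑_{k<n} S_k^ψ f`. -/
noncomputable def vFejerMean (m : ℕ → ℕ) (μ : Measure (VilGroup m))
    (f : VilGroup m → ℂ) (n : ℕ) (x : VilGroup m) : ℂ :=
  (1 / n) * ∑ k ∈ Finset.range n, vPartialSum m μ f k x

/-!
For `x ∈ I_k \ I_{k+1}` the functions `ψ_t`, `t < M_{k+1}`, reduce to the powers
`r_k(x) ^ ⌊t / M_k⌋` of a single `m_k`-th root of unity `r_k(x) ≠ 1`, so `D_{M_{k+1}}(x) = 0`.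
Together with `ψ_{a M_N + t} = ψ_{a M_N} ψ_t` for `t < M_N`, this makes `D_n(x)` bounded in `n`
(so the supremum is a genuine one) and gives the closed form `K_{M_{k+1}}(x) = M_k / (1 - r_k(x))`,
of modulus at least `M_k / 2 ≥ M_k / (2πλ)`. An integrable envelope would therefore be at least
`M_k / 2` on `I_k \ I_{k+1}`, a set of measure at least `1 / (2 M_k)`, so its integrals over these
disjoint sets would all be at least `1 / 4`.
-/

open Finset Function

lemma sum_range_mul_eq_sum_sum {M : Type*} [AddCommMonoid M] (f : ℕ → M) (a b : ℕ) :
    ∑ i ∈ range (a * b), f i = ∑ q ∈ range a, ∑ s ∈ range b, f (q * b + s) := by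
  induction a with
  | zero => simp
  | succ a ih => rw [Nat.succ_mul, sum_range_add, ih, sum_range_succ]

section GeometricSums

variable {R : Type*} [CommSemiring R]

lemma sum_range_pow_mul_add_div (z : R) {M s : ℕ} (q : ℕ) (hs : s ≤ M) :
    ∑ i ∈ range s, z ^ ((q * M + i) / M) = s * z ^ q := by
  have hterm : ∀ i ∈ range s, z ^ ((q * M + i) / M) = z ^ q := by
    intro i hi
    have hiM : i < M := (mem_range.1 hi).trans_le hs
    rw [Nat.add_comm, Nat.add_mul_div_right _ _ (by omega), Nat.div_eq_of_lt hiM, zero_add]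
  rw [sum_congr rfl hterm, sum_const, card_range, nsmul_eq_mul]

lemma sum_range_pow_div (z : R) {M s : ℕ} (q : ℕ) (hs : s ≤ M) :
    ∑ i ∈ range (q * M + s), z ^ (i / M) = M * ∑ i ∈ range q, z ^ i + s * z ^ q := by
  have hblocks : ∀ q, ∑ i ∈ range (q * M), z ^ (i / M) = M * ∑ i ∈ range q, z ^ i := by
    intro q
    induction q with
    | zero => simp
    | succ q ih =>
      rw [Nat.succ_mul, sum_range_add, ih, sum_range_pow_mul_add_div z q le_rfl, sum_range_succ,
        mul_add]
  rw [sum_range_add, hblocks, sum_range_pow_mul_add_div z q hs]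

end GeometricSums

lemma sum_range_sum_range_pow_div {K : Type*} [Field K] {z : K} {n : ℕ} (hzn : z ^ n = 1)
    (hz : z ≠ 1) (M : ℕ) :
    ∑ b ∈ range (n * M), ∑ i ∈ range b, z ^ (i / M) = n * M ^ 2 / (1 - z) := by
  have hgeom : ∑ q ∈ range n, z ^ q = 0 := by rw [geom_sum_eq hz, hzn, sub_self, zero_div]
  set c := (M : K) ^ 2 / (z - 1) with hc
  have hblock : ∀ q ∈ range n, ∑ s ∈ range M, ∑ i ∈ range (q * M + s), z ^ (i / M)
      = (c + ∑ s ∈ range M, (s : K)) * z ^ q - c := by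
    intro q _
    rw [sum_congr rfl fun s hs => sum_range_pow_div z q (mem_range.1 hs).le, sum_add_distrib,
      sum_const, card_range, nsmul_eq_mul, ← sum_mul, geom_sum_eq hz, hc]
    field_simp
    ring
  rw [sum_range_mul_eq_sum_sum, sum_congr rfl hblock, sum_sub_distrib, ← mul_sum, hgeom,
    mul_zero, sum_const, card_range, nsmul_eq_mul, zero_sub]
  rw [hc]
  field_simp
  ring

lemma Antitone.pairwise_disjoint_sdiff_succ {α : Type*} {s : ℕ → Set α} (hs : Antitone s) :
    Pairwise (Disjoint on fun k => s k \ s (k + 1)) := by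
  intro i j hij
  wlog h : i < j generalizing i j
  · exact (this hij.symm (lt_of_le_of_ne (not_lt.1 h) hij.symm)).symm
  exact Set.disjoint_left.2 fun x hi hj => hi.2 (hs h hj.1)

lemma not_integrable_of_le_setIntegral {α : Type*} [MeasurableSpace α] {μ : Measure α}
    {g : α → ℝ} {E : ℕ → Set α} (hE : ∀ k, MeasurableSet (E k)) (hdisj : Pairwise (Disjoint on E))
    (hg : 0 ≤ᵐ[μ] g) {c : ℝ} (hc : 0 < c) (hgE : ∀ k, c ≤ ∫ x in E k, g x ∂μ) :
    ¬ Integrable g μ := by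
  intro hint
  obtain ⟨K, hK⟩ := exists_nat_gt ((∫ x, g x ∂μ) / c)
  have hKc : K * c ≤ ∫ x, g x ∂μ :=
    calc K * c = ∑ _k ∈ range K, c := by simp
      _ ≤ ∑ k ∈ range K, ∫ x in E k, g x ∂μ := sum_le_sum fun k _ => hgE k
      _ = ∫ x in ⋃ k ∈ range K, E k, g x ∂μ :=
        (integral_biUnion_finset _ (fun k _ => hE k) (fun i _ j _ hij => hdisj hij)
          fun k _ => hint.integrableOn).symm
      _ ≤ ∫ x, g x ∂μ := setIntegral_le_integral hint hg
  rw [div_lt_iff₀ hc] at hK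
  linarith

lemma div_two_pi_mul_le_div_two {a : ℝ} (ha : 0 ≤ a) (l : ℕ) : a / (2 * Real.pi * l) ≤ a / 2 := by
  rcases l.eq_zero_or_pos with rfl | hl
  · simp only [Nat.cast_zero, mul_zero, div_zero]
    positivity
  have hl1 : (1 : ℝ) ≤ l := by exact_mod_cast hl
  exact div_le_div_of_nonneg_left ha two_pos (by nlinarith [Real.pi_gt_three])

variable {m : ℕ → ℕ}

lemma Mgen_succ (k : ℕ) : Mgen m (k + 1) = m k * Mgen m k := rfl

lemma Mgen_pos (hm : ∀ k, 2 ≤ m k) (k : ℕ) : 0 < Mgen m k := by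
  induction k with
  | zero => exact Nat.one_pos
  | succ k ih => exact Nat.mul_pos (by linarith [hm k]) ih

lemma Mgen_dvd_Mgen {j k : ℕ} (h : j ≤ k) : Mgen m j ∣ Mgen m k := by
  induction k, h using Nat.le_induction with
  | base => exact dvd_rfl
  | succ k _ ih => exact ih.mul_left (m k)

lemma Mgen_le_Mgen (hm : ∀ k, 2 ≤ m k) {j k : ℕ} (h : j ≤ k) : Mgen m j ≤ Mgen m k :=
  Nat.le_of_dvd (Mgen_pos hm k) (Mgen_dvd_Mgen h)

lemma lt_Mgen_self (hm : ∀ k, 2 ≤ m k) (n : ℕ) : n < Mgen m n := by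
  induction n with
  | zero => exact Nat.one_pos
  | succ n ih => rw [Mgen_succ]; nlinarith [hm n]

lemma vDigit_eq_zero_of_lt {n j : ℕ} (h : n < Mgen m j) : vDigit m n j = 0 := by
  simp [vDigit, Nat.div_eq_of_lt h]

lemma vDigit_mul_Mgen_add (hm : ∀ k, 2 ≤ m k) {N t : ℕ} (ht : t < Mgen m N) (a j : ℕ) :
    vDigit m (a * Mgen m N + t) j = vDigit m (a * Mgen m N) j + vDigit m t j := by
  rcases lt_or_ge j N with hj | hj
  · obtain ⟨c, hc⟩ := Mgen_dvd_Mgen (m := m) hj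
    have hMj := Mgen_pos hm j
    have hsplit : a * Mgen m N = a * c * m j * Mgen m j := by rw [hc, Mgen_succ]; ring
    rw [vDigit, vDigit, vDigit, hsplit, Nat.mul_div_cancel _ hMj, Nat.mul_mod_left, zero_add,
      Nat.add_comm, Nat.add_mul_div_right _ _ hMj, Nat.add_mul_mod_self_right]
  · obtain ⟨c, hc⟩ := Mgen_dvd_Mgen (m := m) hj
    have hMN := Mgen_pos hm N
    have hquot : (a * Mgen m N + t) / Mgen m j = a * Mgen m N / Mgen m j := by
      rw [hc, ← Nat.div_div_eq_div_mul, ← Nat.div_div_eq_div_mul, Nat.mul_comm a,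
        Nat.mul_add_div hMN, Nat.div_eq_of_lt ht, Nat.add_zero, Nat.mul_div_cancel_left _ hMN]
    rw [vDigit, vDigit, hquot, vDigit_eq_zero_of_lt (ht.trans_le (Mgen_le_Mgen hm hj)),
      Nat.add_zero]

lemma vilenkin_eq_prod_range (hm : ∀ k, 2 ≤ m k) {n N : ℕ} (hn : n < Mgen m N)
    (x : VilGroup m) : vilenkin m n x = ∏ j ∈ range N, rademacher m j x ^ vDigit m n j := by
  have hvanish : ∀ {L}, n < Mgen m L → ∀ j, L ≤ j → rademacher m j x ^ vDigit m n j = 1 :=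
    fun hL j hj => by rw [vDigit_eq_zero_of_lt (hL.trans_le (Mgen_le_Mgen hm hj)), pow_zero]
  have hn' : n < Mgen m (n + 1) := (lt_Mgen_self hm n).trans_le (Mgen_le_Mgen hm n.le_succ)
  rw [vilenkin]
  rcases le_total (n + 1) N with h | h
  · exact prod_subset (range_subset_range.2 h) fun j _ hj => hvanish hn' j (by simpa using hj)
  · exact (prod_subset (range_subset_range.2 h) fun j _ hj => hvanish hn j (by simpa using hj)).symm

lemma vilenkin_mul_Mgen_add (hm : ∀ k, 2 ≤ m k) {N t : ℕ} (ht : t < Mgen m N) (a : ℕ)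
    (x : VilGroup m) :
    vilenkin m (a * Mgen m N + t) x = vilenkin m (a * Mgen m N) x * vilenkin m t x := by
  set L := a * Mgen m N + t
  have hL : L < Mgen m L := lt_Mgen_self hm L
  rw [vilenkin_eq_prod_range hm hL, vilenkin_eq_prod_range hm (N := L) (by omega),
    vilenkin_eq_prod_range hm (N := L) (by omega), ← prod_mul_distrib]
  exact prod_congr rfl fun j _ => by rw [vDigit_mul_Mgen_add hm ht, pow_add]

lemma rademacher_eq_one_of_eq_zero {j : ℕ} {x : VilGroup m} (h : x j = 0) :
    rademacher m j x = 1 := by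
  simp [rademacher, h]

lemma vilenkin_of_mem_cylV (hm : ∀ k, 2 ≤ m k) {k t : ℕ} (ht : t < Mgen m (k + 1))
    {x : VilGroup m} (hx : x ∈ cylV m k) : vilenkin m t x = rademacher m k x ^ (t / Mgen m k) := by
  rw [vilenkin_eq_prod_range hm ht, prod_range_succ, prod_eq_one, one_mul, vDigit,
    Nat.mod_eq_of_lt]
  · rwa [Nat.div_lt_iff_lt_mul (Mgen_pos hm k), ← Mgen_succ]
  · exact fun j hj => by rw [rademacher_eq_one_of_eq_zero (hx j (mem_range.1 hj)), one_pow]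

lemma rademacher_eq_exp_pow (k : ℕ) (x : VilGroup m) :
    rademacher m k x = Complex.exp (2 * Real.pi * Complex.I / m k) ^ (x k).val := by
  rw [rademacher, ← Complex.exp_nat_mul]
  congr 1
  ring

lemma rademacher_pow_self {k : ℕ} (hk : m k ≠ 0) (x : VilGroup m) :
    rademacher m k x ^ m k = 1 := by
  rw [rademacher_eq_exp_pow, pow_right_comm, (Complex.isPrimitiveRoot_exp _ hk).pow_eq_one, one_pow]

lemma rademacher_ne_one {k : ℕ} (hk : m k ≠ 0) {x : VilGroup m} (hxk : x k ≠ 0) :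
    rademacher m k x ≠ 1 := by
  have : NeZero (m k) := ⟨hk⟩
  rw [rademacher_eq_exp_pow, Ne, (Complex.isPrimitiveRoot_exp _ hk).pow_eq_one_iff_dvd]
  exact fun h => hxk ((ZMod.val_eq_zero _).1 (Nat.eq_zero_of_dvd_of_lt h (ZMod.val_lt _)))

lemma norm_rademacher (k : ℕ) (x : VilGroup m) : ‖rademacher m k x‖ = 1 := by
  have harg : 2 * Real.pi * Complex.I * ((x k).val : ℂ) / (m k : ℂ)
      = ((2 * Real.pi * (x k).val / m k : ℝ) : ℂ) * Complex.I := by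
    push_cast
    ring
  rw [rademacher, harg, Complex.norm_exp_ofReal_mul_I]

lemma norm_vilenkin (n : ℕ) (x : VilGroup m) : ‖vilenkin m n x‖ = 1 := by
  simp [vilenkin, norm_prod, norm_rademacher]

lemma vilenkinDirichlet_mul_Mgen_add (hm : ∀ k, 2 ≤ m k) {N b : ℕ} (hb : b ≤ Mgen m N) (a : ℕ)
    (x : VilGroup m) :
    vilenkinDirichlet m (a * Mgen m N + b) x
      = (∑ u ∈ range a, vilenkin m (u * Mgen m N) x) * vilenkinDirichlet m (Mgen m N) x
        + vilenkin m (a * Mgen m N) x * vilenkinDirichlet m b x := by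
  simp only [vilenkinDirichlet]
  rw [sum_range_add, sum_range_mul_eq_sum_sum, sum_mul, mul_sum]
  congr 1
  · refine sum_congr rfl fun u _ => ?_
    rw [mul_sum]
    exact sum_congr rfl fun t ht => vilenkin_mul_Mgen_add hm (mem_range.1 ht) u x
  · exact sum_congr rfl fun t ht => vilenkin_mul_Mgen_add hm ((mem_range.1 ht).trans_le hb) a x

lemma norm_vilenkinDirichlet_le (n : ℕ) (x : VilGroup m) : ‖vilenkinDirichlet m n x‖ ≤ n :=
  (norm_sum_le _ _).trans (by simp [norm_vilenkin])

lemma norm_vilenkinDirichlet_le_Mgen (hm : ∀ k, 2 ≤ m k) {N : ℕ} {x : VilGroup m}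
    (hD : vilenkinDirichlet m (Mgen m N) x = 0) (n : ℕ) :
    ‖vilenkinDirichlet m n x‖ ≤ Mgen m N := by
  have hr : n % Mgen m N < Mgen m N := Nat.mod_lt _ (Mgen_pos hm N)
  rw [← Nat.div_add_mod' n (Mgen m N), vilenkinDirichlet_mul_Mgen_add hm hr.le, hD, mul_zero,
    zero_add, norm_mul, norm_vilenkin, one_mul]
  exact (norm_vilenkinDirichlet_le _ x).trans (by exact_mod_cast hr.le)

lemma norm_one_div_mul_sum_range_le {f : ℕ → ℂ} {C : ℝ} (hf : ∀ k, ‖f k‖ ≤ C) (n : ℕ) :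
    ‖(1 / n : ℂ) * ∑ k ∈ range n, f k‖ ≤ C := by
  rcases n.eq_zero_or_pos with rfl | hn
  · simpa using (norm_nonneg _).trans (hf 0)
  have hsum : ‖∑ k ∈ range n, f k‖ ≤ n * C := by
    simpa using (norm_sum_le _ _).trans (sum_le_card_nsmul (range n) _ C fun k _ => hf k)
  rw [norm_mul, norm_div, norm_one, Complex.norm_natCast, one_div_mul_eq_div,
    div_le_iff₀ (by exact_mod_cast hn), mul_comm]
  exact hsum

lemma vilenkinDirichlet_eq_sum_range_pow_div (hm : ∀ k, 2 ≤ m k) {k b : ℕ}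
    (hb : b ≤ Mgen m (k + 1)) {x : VilGroup m} (hx : x ∈ cylV m k) :
    vilenkinDirichlet m b x = ∑ i ∈ range b, rademacher m k x ^ (i / Mgen m k) :=
  sum_congr rfl fun _ ht => vilenkin_of_mem_cylV hm ((mem_range.1 ht).trans_le hb) hx

lemma vilenkinDirichlet_Mgen_succ_eq_zero (hm : ∀ k, 2 ≤ m k) {k : ℕ} {x : VilGroup m}
    (hx : x ∈ cylV m k) (hxk : x k ≠ 0) : vilenkinDirichlet m (Mgen m (k + 1)) x = 0 := by
  have hk : m k ≠ 0 := by linarith [hm k]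
  rw [vilenkinDirichlet_eq_sum_range_pow_div hm le_rfl hx, Mgen_succ, ← add_zero (m k * _),
    sum_range_pow_div _ _ (Nat.zero_le _), geom_sum_eq (rademacher_ne_one hk hxk),
    rademacher_pow_self hk]
  simp

lemma bddAbove_range_norm_vilenkinFejer (hm : ∀ k, 2 ≤ m k) {k : ℕ} {x : VilGroup m}
    (hx : x ∈ cylV m k) (hxk : x k ≠ 0) :
    BddAbove (Set.range fun n => ‖vilenkinFejer m (n + 1) x‖) := by
  refine ⟨Mgen m (k + 1), ?_⟩
  rintro _ ⟨n, rfl⟩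
  exact norm_one_div_mul_sum_range_le
    (norm_vilenkinDirichlet_le_Mgen hm (vilenkinDirichlet_Mgen_succ_eq_zero hm hx hxk)) _

lemma vilenkinFejer_Mgen_succ (hm : ∀ k, 2 ≤ m k) {k : ℕ} {x : VilGroup m}
    (hx : x ∈ cylV m k) (hxk : x k ≠ 0) :
    vilenkinFejer m (Mgen m (k + 1)) x = Mgen m k / (1 - rademacher m k x) := by
  have hk : m k ≠ 0 := by linarith [hm k]
  rw [vilenkinFejer, sum_congr rfl fun b hb =>
      vilenkinDirichlet_eq_sum_range_pow_div hm (mem_range.1 hb).le hx, Mgen_succ,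
    sum_range_sum_range_pow_div (rademacher_pow_self hk x) (rademacher_ne_one hk hxk)]
  push_cast
  field_simp

lemma Mgen_div_two_le_norm_vilenkinFejer (hm : ∀ k, 2 ≤ m k) {k : ℕ} {x : VilGroup m}
    (hx : x ∈ cylV m k) (hxk : x k ≠ 0) :
    (Mgen m k : ℝ) / 2 ≤ ‖vilenkinFejer m (Mgen m (k + 1)) x‖ := by
  have hr : 0 < ‖1 - rademacher m k x‖ :=
    norm_pos_iff.2 (sub_ne_zero.2 (rademacher_ne_one (by linarith [hm k]) hxk).symm)
  have hr2 : ‖1 - rademacher m k x‖ ≤ 2 := by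
    simpa [norm_rademacher, one_add_one_eq_two] using norm_sub_le (1 : ℂ) (rademacher m k x)
  rw [vilenkinFejer_Mgen_succ hm hx hxk, norm_div, Complex.norm_natCast]
  exact div_le_div_of_nonneg_left (Nat.cast_nonneg _) hr hr2

lemma Mgen_div_two_le_iSup_norm_vilenkinFejer (hm : ∀ k, 2 ≤ m k) {k : ℕ} {x : VilGroup m}
    (hx : x ∈ cylV m k) (hxk : x k ≠ 0) :
    (Mgen m k : ℝ) / 2 ≤ ⨆ n : ℕ, ‖vilenkinFejer m (n + 1) x‖ := by
  have h := Mgen_div_two_le_norm_vilenkinFejer hm hx hxk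
  rw [← Nat.sub_add_cancel (Mgen_pos hm (k + 1))] at h
  exact h.trans (le_ciSup (bddAbove_range_norm_vilenkinFejer hm hx hxk) _)

lemma antitone_cylV : Antitone (cylV m) :=
  fun _ _ hij _ hy l hl => hy l (hl.trans_le hij)

lemma mem_cylV_sdiff_succ {k : ℕ} {x : VilGroup m} :
    x ∈ cylV m k \ cylV m (k + 1) ↔ x ∈ cylV m k ∧ x k ≠ 0 := by
  refine and_congr_right fun hx => not_congr ⟨fun h => h k k.lt_succ_self, fun h j hj => ?_⟩
  rcases Nat.lt_succ_iff_lt_or_eq.1 hj with hj | rfl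
  exacts [hx j hj, h]

lemma measurableSet_cylV (N : ℕ) : MeasurableSet (cylV m N) := by
  simp only [cylV, Set.ofPred_forall]
  exact .iInter fun j => .iInter fun _ => measurable_pi_apply j (measurableSet_singleton 0)

section HaarMeasure

variable {μ : Measure (VilGroup m)} (hμ : IsVilHaar m μ)
include hμ

lemma measure_cylV (N : ℕ) : μ (cylV m N) = (Mgen m N : ENNReal)⁻¹ :=
  hμ N 0

lemma measure_cylV_ne_top (hm : ∀ k, 2 ≤ m k) (N : ℕ) : μ (cylV m N) ≠ ⊤ := by
  rw [measure_cylV hμ]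
  exact ENNReal.inv_ne_top.2 (by exact_mod_cast (Mgen_pos hm N).ne')

lemma measureReal_cylV (N : ℕ) : μ.real (cylV m N) = (Mgen m N : ℝ)⁻¹ := by
  simp [measureReal_def, measure_cylV hμ, ENNReal.toReal_inv]

lemma inv_two_mul_Mgen_le_measureReal_cylV_sdiff (hm : ∀ k, 2 ≤ m k) (k : ℕ) :
    (2 * Mgen m k : ℝ)⁻¹ ≤ μ.real (cylV m k \ cylV m (k + 1)) := by
  rw [measureReal_sdiff (antitone_cylV k.le_succ) (measurableSet_cylV _)
    (measure_cylV_ne_top hμ hm k), measureReal_cylV hμ, measureReal_cylV hμ, Mgen_succ,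
    Nat.cast_mul, mul_inv, mul_inv]
  have hM : 0 < (Mgen m k : ℝ)⁻¹ := by have := Mgen_pos hm k; positivity
  have hmk : (m k : ℝ)⁻¹ ≤ 2⁻¹ := inv_anti₀ two_pos (by exact_mod_cast hm k)
  nlinarith

lemma one_div_four_le_setIntegral_cylV_sdiff (hm : ∀ k, 2 ≤ m k) {g : VilGroup m → ℝ}
    (hg : Integrable g μ) (hdom : ∀ n : ℕ, 0 < n → ∀ x, ‖vilenkinFejer m n x‖ ≤ g x) (k : ℕ) :
    1 / 4 ≤ ∫ x in cylV m k \ cylV m (k + 1), g x ∂μ := by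
  have hMk : (0 : ℝ) < Mgen m k := by exact_mod_cast Mgen_pos hm k
  have hgE : ∀ x ∈ cylV m k \ cylV m (k + 1), (Mgen m k : ℝ) / 2 ≤ g x := fun x hx => by
    obtain ⟨hx, hxk⟩ := mem_cylV_sdiff_succ.1 hx
    exact (Mgen_div_two_le_norm_vilenkinFejer hm hx hxk).trans (hdom _ (Mgen_pos hm _) x)
  calc (1 : ℝ) / 4 = Mgen m k / 2 * (2 * Mgen m k : ℝ)⁻¹ := by field_simp; norm_num
    _ ≤ Mgen m k / 2 * μ.real (cylV m k \ cylV m (k + 1)) := by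
      gcongr
      exact inv_two_mul_Mgen_le_measureReal_cylV_sdiff hμ hm k
    _ ≤ ∫ x in cylV m k \ cylV m (k + 1), g x ∂μ :=
      setIntegral_ge_of_const_le_real ((measurableSet_cylV k).diff (measurableSet_cylV _))
        (measure_ne_top_of_subset Set.sdiff_subset (measure_cylV_ne_top hμ hm k)) hgE
        hg.integrableOn

end HaarMeasure

theorem vilenkinFejer_no_integrable_envelope_general
    (m : ℕ → ℕ) (hm : ∀ k, 2 ≤ m k) (lam : ℕ)
    (μ : Measure (VilGroup m)) (hμ : IsVilHaar m μ) :
    (∀ (x : VilGroup m) (k : ℕ), (∀ j < k, x j = 0) → x k ≠ 0 →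
      (Mgen m k : ℝ) / (2 * Real.pi * lam) ≤
        ⨆ n : ℕ, ‖vilenkinFejer m (n + 1) x‖) ∧
      ¬ ∃ g : VilGroup m → ℝ, Integrable g μ ∧
          ∀ n : ℕ, 0 < n → ∀ x, ‖vilenkinFejer m n x‖ ≤ g x := by
  refine ⟨fun x k hx hxk => (div_two_pi_mul_le_div_two (Nat.cast_nonneg _) lam).trans
    (Mgen_div_two_le_iSup_norm_vilenkinFejer hm hx hxk), ?_⟩
  rintro ⟨g, hg, hdom⟩
  have hg0 : 0 ≤ᵐ[μ] g := ae_of_all _ fun x => (norm_nonneg _).trans (hdom 1 one_pos x)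
  exact not_integrable_of_le_setIntegral
    (fun k => (measurableSet_cylV k).diff (measurableSet_cylV _)) antitone_cylV.pairwise_disjoint_sdiff_succ hg0 (by norm_num)
    (one_div_four_le_setIntegral_cylV_sdiff hμ hm hg hdom) hg

/-- **The Vilenkin-Fejér kernels have no integrable upper envelope.**
On a bounded Vilenkin group with `λ = sup_n m_n`, for every nonzero `x` (say
`x ∈ I_k \ I_{k+1}`, so that `|x| = M_k⁻¹`) one has
`sup_n |K_n^ψ(x)| ≥ (2πλ|x|)⁻¹ = M_k/(2πλ)`; consequently there is no integrable
function dominating all the kernels `K_n^ψ`. -/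
theorem vilenkinFejer_no_integrable_envelope
    (m : ℕ → ℕ) (hm : ∀ k, 2 ≤ m k) (lam : ℕ) (hlam : ∀ k, m k ≤ lam)
    (μ : Measure (VilGroup m)) [IsProbabilityMeasure μ] (hμ : IsVilHaar m μ) :
    (∀ (x : VilGroup m) (k : ℕ), (∀ j < k, x j = 0) → x k ≠ 0 →
      (Mgen m k : ℝ) / (2 * Real.pi * lam) ≤
        ⨆ n : ℕ, ‖vilenkinFejer m (n + 1) x‖) ∧
      ¬ ∃ g : VilGroup m → ℝ, Integrable g μ ∧
          ∀ n : ℕ, 0 < n → ∀ x, ‖vilenkinFejer m n x‖ ≤ g x :=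
  vilenkinFejer_no_integrable_envelope_general m hm lam μ hμ
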